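/- The set B̄ := { e_a − e_{g_j} − e_{a−g_j} : 1 ≤ j ≤ m, a ∈ A \ {g_1, …, g_m} } generates the subgroup R of F (here e_0 = 0 by convention). -/

import Mathlib

/-!
Write `rel a b = e (a + b) - e a - e b`. The coboundary identity
`rel a (b + c) = rel a b + rel (a + b) c - rel b c` shows that, for any subgroup `S` of `F`, the
`b` with `rel a b ∈ S` for all `a` form a subgroup of `A`. As the `g j` generate `A`, it suffices
to put every `rel a (g j)` into the span of `B̄`. If `a + g j` is not a generator, `rel a (g j)`
lies in `B̄` itself. Otherwise `a = 0`, or `a = g k - g j` with `k ≠ j`; then independence of the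
`H j` keeps `0` and `g k - g j` off the generators, and `rel (g k - g j) (g j)` is the difference
of the elements of `B̄` for `(j, 0)` and for `(k, g k - g j)`.
-/

/-- Basis element of the free abelian group on the nonzero elements of `A`,
with the convention `e 0 = 0`. -/
noncomputable def e {A : Type*} [AddCommGroup A] [DecidableEq A] (a : A) :
    ({x : A // x ≠ 0} →₀ ℤ) :=
  if h : a = 0 then 0 else Finsupp.single ⟨a, h⟩ 1

open AddSubgroup

section Generators

variable {A ι : Type*} [AddCommGroup A]

theorem DirectSum.IsInternal.addSubgroup_iSup_eq_top [DecidableEq ι] {H : ι → AddSubgroup A}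
    (h : DirectSum.IsInternal H) : iSup H = ⊤ := by
  refine eq_top_iff.2 fun b _ ↦ ?_
  obtain ⟨x, rfl⟩ := h.surjective b
  clear ‹_ ∈ ⊤›
  induction x using DirectSum.induction_on with
  | zero => exact zero_mem _
  | of i y => exact mem_iSup_of_mem i (by simp)
  | add x y hx hy => rw [map_add]; exact add_mem hx hy

theorem closure_range_eq_iSup_zmultiples (g : ι → A) :
    closure (Set.range g) = ⨆ i, zmultiples (g i) := by
  rw [← Set.iUnion_singleton_eq_range, AddSubgroup.closure_iUnion]
  simp only [zmultiples_eq_closure]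

theorem sub_notMem_range_of_iSupIndep {H : ι → AddSubgroup A} (hind : iSupIndep H)
    {g : ι → A} (hgH : ∀ i, g i ∈ H i) (hg : ∀ i, g i ≠ 0) {j k : ι} (hkj : k ≠ j) :
    g k - g j ∉ Set.range g := by
  rintro ⟨i, hi⟩
  obtain rfl | hik := eq_or_ne i k
  · exact hg j (by simpa using hi.symm)
  have hk : g k ∈ ⨆ (l) (_ : l ≠ k), H l := by
    rw [← sub_add_cancel (g k) (g j), ← hi]
    exact add_mem (mem_iSup_of_mem i (mem_iSup_of_mem hik (hgH i)))
      (mem_iSup_of_mem j (mem_iSup_of_mem hkj.symm (hgH j)))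
  exact hg k ((hind k).le_bot ⟨hgH k, hk⟩)

end Generators

section Relations

variable {A : Type*} [AddCommGroup A] [DecidableEq A]

theorem e_zero : e (0 : A) = 0 := dif_pos rfl

noncomputable def rel (a b : A) : {x : A // x ≠ 0} →₀ ℤ := e (a + b) - e a - e b

theorem rel_add_right (a b c : A) : rel a (b + c) = rel a b + rel (a + b) c - rel b c := by
  simp only [rel, add_assoc]
  abel

theorem rel_zero_left (b : A) : rel 0 b = 0 := by simp [rel, e_zero]

theorem rel_zero_right (a : A) : rel a 0 = 0 := by simp [rel, e_zero]

theorem rel_neg_right (a b : A) : rel a (-b) = rel (-b) b - rel (a - b) b := by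
  simp only [rel, ← sub_eq_add_neg, neg_add_cancel, sub_add_cancel, e_zero]
  abel

def relSubgroup (S : AddSubgroup ({x : A // x ≠ 0} →₀ ℤ)) : AddSubgroup A where
  carrier := {b | ∀ a, rel a b ∈ S}
  zero_mem' a := by simp only [rel_zero_right, zero_mem]
  add_mem' {b c} hb hc a := by
    rw [rel_add_right]
    exact sub_mem (add_mem (hb a) (hc (a + b))) (hc b)
  neg_mem' {b} hb a := by
    rw [rel_neg_right]
    exact sub_mem (hb (-b)) (hb (a - b))

theorem closure_rel_le {S : AddSubgroup ({x : A // x ≠ 0} →₀ ℤ)} {T : Set A}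
    (hT : closure T = ⊤) (hS : ∀ t ∈ T, ∀ a, rel a t ∈ S) :
    closure {x | ∃ a b : A, x = rel a b} ≤ S := by
  have hrel : relSubgroup S = ⊤ := top_le_iff.1 (hT ▸ (closure_le _).2 hS)
  rw [closure_le]
  rintro _ ⟨a, b, rfl⟩
  exact (hrel ▸ mem_top b : b ∈ relSubgroup S) a

end Relations

section Bbar

variable {A ι : Type*} [AddCommGroup A] [DecidableEq A]

def bbar (g : ι → A) : Set ({x : A // x ≠ 0} →₀ ℤ) :=
  {x | ∃ (j : ι) (a : A), a ∉ Set.range g ∧ x = e a - e (g j) - e (a - g j)}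

theorem closure_bbar_le (g : ι → A) : closure (bbar g) ≤ closure {x | ∃ a b : A, x = rel a b} := by
  rw [closure_le]
  rintro _ ⟨j, a, -, rfl⟩
  refine subset_closure ⟨a - g j, g j, ?_⟩
  simp only [rel, sub_add_cancel]
  abel

theorem rel_mem_closure_bbar {g : ι → A} (h0 : 0 ∉ Set.range g)
    (hsub : ∀ k j, k ≠ j → g k - g j ∉ Set.range g) (j : ι) (a : A) :
    rel a (g j) ∈ closure (bbar g) := by
  by_cases ha : a + g j ∈ Set.range g
  · obtain ⟨k, hk⟩ := ha
    obtain rfl | hkj := eq_or_ne k j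
    · rw [right_eq_add.1 hk, rel_zero_left]
      exact zero_mem _
    obtain rfl : a = g k - g j := eq_sub_of_add_eq hk.symm
    have hdiff : rel (g k - g j) (g j) =
        (e 0 - e (g j) - e (0 - g j)) - (e (g k - g j) - e (g k) - e (g k - g j - g k)) := by
      simp only [rel, sub_add_cancel, sub_sub_cancel_left, zero_sub, e_zero]
      abel
    rw [hdiff]
    exact sub_mem (subset_closure ⟨j, 0, h0, rfl⟩)
      (subset_closure ⟨k, g k - g j, hsub k j hkj, rfl⟩)
  · refine subset_closure ⟨j, a + g j, ha, ?_⟩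
    simp only [rel, add_sub_cancel_right]
    abel

end Bbar

theorem closure_Bbar_eq_R_general {A : Type*} [AddCommGroup A] [DecidableEq A]
    (m : ℕ) (g : Fin m → A) (H : Fin m → AddSubgroup A)
    (hH : ∀ j, H j = AddSubgroup.zmultiples (g j))
    (hg : ∀ j, g j ≠ 0)
    (hInt : DirectSum.IsInternal H) :
    AddSubgroup.closure
        {x : {x : A // x ≠ 0} →₀ ℤ |
          ∃ (j : Fin m) (a : A), a ∉ Set.range g ∧ x = e a - e (g j) - e (a - g j)}
      = AddSubgroup.closure
        {x : {x : A // x ≠ 0} →₀ ℤ | ∃ a b : A, x = e (a + b) - e a - e b} := by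
  have hgH (j : Fin m) : g j ∈ H j := hH j ▸ mem_zmultiples (g j)
  have h0 : (0 : A) ∉ Set.range g := fun ⟨j, hj⟩ ↦ hg j hj
  have hsub (k j : Fin m) (hkj : k ≠ j) : g k - g j ∉ Set.range g :=
    sub_notMem_range_of_iSupIndep hInt.addSubgroup_iSupIndep hgH hg hkj
  have hgen : closure (Set.range g) = ⊤ := by
    simp_rw [closure_range_eq_iSup_zmultiples, ← hH]
    exact hInt.addSubgroup_iSup_eq_top
  refine le_antisymm (closure_bbar_le g) (closure_rel_le hgen ?_)
  rintro _ ⟨j, rfl⟩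
  exact rel_mem_closure_bbar h0 hsub j

theorem closure_Bbar_eq_R {A : Type*} [AddCommGroup A] [Fintype A] [DecidableEq A]
    (m : ℕ) (g : Fin m → A) (H : Fin m → AddSubgroup A)
    (hH : ∀ j, H j = AddSubgroup.zmultiples (g j))
    (hg : ∀ j, g j ≠ 0)
    (hInt : DirectSum.IsInternal H) :
    AddSubgroup.closure
        {x : {x : A // x ≠ 0} →₀ ℤ |
          ∃ (j : Fin m) (a : A), a ∉ Set.range g ∧ x = e a - e (g j) - e (a - g j)}
      = AddSubgroup.closure
        {x : {x : A // x ≠ 0} →₀ ℤ | ∃ a b : A, x = e (a + b) - e a - e b} :=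
  closure_Bbar_eq_R_general m g H hH hg hInt
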